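/- For every N ∈ ℕ: (a) the trace of K_N equals [N]_q (the image of the HOMFLY dimension relation under evaluation at t = N); (b) ptr₂((id ⊗ K_N) ∘ β_N) = q^N · id_{V_N}; and (c) ptr₂((id ⊗ K_N) ∘ β_N⁻¹) = q^{−N} · id_{V_N} (the images of the positive and negative twist relations under evaluation at t = N). -/

import Mathlib

open scoped TensorProduct

set_option synthInstance.maxHeartbeats 1000000
set_option maxHeartbeats 1000000
noncomputable section

abbrev F : Type := RatFunc ℂ

def q : F := RatFunc.X

abbrev V (N : ℕ) : Type := Fin N → F

def bV (N : ℕ) : Module.Basis (Fin N) F (V N) := Pi.basisFun F (Fin N)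

def e {N : ℕ} (i : Fin N) : V N := bV N i

def bVV (N : ℕ) : Module.Basis (Fin N × Fin N) F (V N ⊗[F] V N) :=
  (bV N).tensorProduct (bV N)

/-- The HOMFLY R-matrix β_N. -/
def β (N : ℕ) : V N ⊗[F] V N →ₗ[F] V N ⊗[F] V N :=
  (bVV N).constr F fun p =>
    if p.1 = p.2 then q • (e p.1 ⊗ₜ[F] e p.1)
    else if p.1 < p.2 then e p.2 ⊗ₜ[F] e p.1
    else e p.2 ⊗ₜ[F] e p.1 + (q - q⁻¹) • (e p.1 ⊗ₜ[F] e p.2)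

/-- Linear inclusion induced by a map of index sets. -/
def emb {a N : ℕ} (f : Fin a → Fin N) : V a →ₗ[F] V N :=
  (bV a).constr F fun i => e (f i)

def ι₁ (m n : ℕ) : Fin m → Fin (m + n) := Fin.castAdd n
def ι₂ (m n : ℕ) : Fin n → Fin (m + n) := Fin.natAdd m

/-- The Levi braiding c_{m,n}. -/
def levi (m n : ℕ) : V (m + n) ⊗[F] V (m + n) →ₗ[F] V (m + n) ⊗[F] V (m + n) :=
  (bVV (m + n)).constr F fun p =>
    if ha : (p.1 : ℕ) < m then
      if hb : (p.2 : ℕ) < m then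
        TensorProduct.map (emb (ι₁ m n)) (emb (ι₁ m n))
          (β m (e ⟨p.1, ha⟩ ⊗ₜ[F] e ⟨p.2, hb⟩))
      else e p.2 ⊗ₜ[F] e p.1
    else
      if hb : (p.2 : ℕ) < m then e p.2 ⊗ₜ[F] e p.1
      else
        TensorProduct.map (emb (ι₂ m n)) (emb (ι₂ m n))
          (β n (e ⟨(p.1 : ℕ) - m, by have := p.1.isLt; omega⟩ ⊗ₜ[F]
                e ⟨(p.2 : ℕ) - m, by have := p.2.isLt; omega⟩))

/-- Partial trace over the second tensor factor. -/
def ptr {N : ℕ} (Φ : V N ⊗[F] V N →ₗ[F] V N ⊗[F] V N) : V N →ₗ[F] V N :=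
  (bV N).constr F fun i =>
    ∑ j : Fin N,
      (TensorProduct.rid F (V N))
        (TensorProduct.map LinearMap.id (LinearMap.proj j) (Φ (e i ⊗ₜ[F] e j)))

/-- Quantum integer [n]_q. -/
def qint (n : ℤ) : F := (q ^ n - q ^ (-n)) / (q - q⁻¹)

/-- The diagonal operator `K_N` with `K_N (e i) = q^(N-1-2i) • e i`. -/
def K (N : ℕ) : V N →ₗ[F] V N :=
  (bV N).constr F fun i => (q ^ ((N : ℤ) - 1 - 2 * (i.val : ℤ))) • e i

/-! With `a j = q ^ (N - 2j)`, the `K_N`-weight of `e j` satisfies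
`(q - q⁻¹) q ^ (N - 1 - 2j) = a j - a (j + 1)`, so the trace of `K_N` telescopes to
`(a 0 - a N) / (q - q⁻¹) = [N]_q`. In `ptr₂((id ⊗ K_N) ∘ β_N) (e i)` only the indices `j ≤ i`
contribute: `a j - a (j + 1)` for `j < i` and `q · q ^ (N - 1 - 2i) = a i` for `j = i`, which
telescopes to `a 0 = q ^ N`.
The R-matrix satisfies the Hecke relation `β² = (q - q⁻¹) β + 1`, so `β⁻¹ = β - (q - q⁻¹)`. As
`ptr₂(id ⊗ f) = tr f · id`, the negative twist is `q ^ N - (q - q⁻¹) [N]_q = q ^ (-N)`. -/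

lemma q_ne_zero : q ≠ 0 := RatFunc.X_ne_zero

lemma q_sub_q_inv_ne_zero : q - q⁻¹ ≠ 0 := by
  intro h
  have hsq : (Polynomial.X * Polynomial.X : Polynomial ℂ) = 1 := by
    apply IsFractionRing.injective (Polynomial ℂ) F
    have : q * q = 1 := by
      rw [sub_eq_zero] at h
      nth_rewrite 2 [h]
      exact mul_inv_cancel₀ q_ne_zero
    simpa [q] using this
  simpa using congrArg (Polynomial.eval 0) hsq

lemma q_mul_zpow_sub_one (N j : ℕ) : q * q ^ ((N : ℤ) - 1 - 2 * j) = q ^ ((N : ℤ) - 2 * j) := by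
  rw [← zpow_one_add₀ q_ne_zero]; ring_nf

lemma q_sub_q_inv_mul_zpow_sub_one (N j : ℕ) :
    (q - q⁻¹) * q ^ ((N : ℤ) - 1 - 2 * j)
      = q ^ ((N : ℤ) - 2 * j) - q ^ ((N : ℤ) - 2 * ↑(j + 1)) := by
  rw [sub_mul, ← zpow_one_add₀ q_ne_zero, ← zpow_neg_one, ← zpow_add₀ q_ne_zero]
  push_cast; ring_nf

lemma sub_inv_mul_qint (n : ℤ) : (q - q⁻¹) * qint n = q ^ n - q ^ (-n) :=
  mul_div_cancel₀ _ q_sub_q_inv_ne_zero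

theorem Finset.sum_range_truncated_telescope {G : Type*} [AddCommGroup G] (f : ℕ → G) {i N : ℕ}
    (hi : i < N) :
    ∑ j ∈ range N, (if j < i then f j - f (j + 1) else if j = i then f i else 0) = f 0 := by
  obtain ⟨k, rfl⟩ : ∃ k, N = i + 1 + k := ⟨N - (i + 1), by omega⟩
  have htail : ∀ x ∈ range k, (if i + 1 + x < i then f (i + 1 + x) - f (i + 1 + x + 1)
      else if i + 1 + x = i then f i else 0) = 0 := fun x _ => by
    rw [if_neg (by omega), if_neg (by omega)]
  have hhead : ∀ j ∈ range i, (if j < i then f j - f (j + 1) else if j = i then f i else 0)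
      = f j - f (j + 1) := fun j hj => if_pos (mem_range.mp hj)
  rw [sum_range_add, sum_eq_zero htail, sum_range_succ, sum_congr rfl hhead, sum_range_sub',
    if_neg (lt_irrefl i), if_pos rfl]
  abel

section

variable {N : ℕ}

lemma e_apply (k j : Fin N) : e k j = if j = k then 1 else 0 := by
  simp [e, bV, Pi.single_apply]

lemma bVV_apply (i j : Fin N) : bVV N (i, j) = e i ⊗ₜ[F] e j :=
  Module.Basis.tensorProduct_apply _ _ i j

lemma β_apply (i j : Fin N) :
    β N (e i ⊗ₜ[F] e j) =
      if i = j then q • (e i ⊗ₜ[F] e i)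
      else if i < j then e j ⊗ₜ[F] e i
      else e j ⊗ₜ[F] e i + (q - q⁻¹) • (e i ⊗ₜ[F] e j) := by
  rw [← bVV_apply, β, Module.Basis.constr_basis, bVV_apply]

lemma K_apply (i : Fin N) : K N (e i) = q ^ ((N : ℤ) - 1 - 2 * (i : ℕ)) • e i :=
  (bV N).constr_basis F _ i

lemma ptr_apply (Φ : V N ⊗[F] V N →ₗ[F] V N ⊗[F] V N) (i : Fin N) :
    ptr Φ (e i) = ∑ j : Fin N,
      TensorProduct.rid F (V N)
        (TensorProduct.map LinearMap.id (LinearMap.proj j) (Φ (e i ⊗ₜ[F] e j))) :=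
  (bV N).constr_basis F _ i

lemma ext_e {M : Type*} [AddCommMonoid M] [Module F M] {f g : V N →ₗ[F] M}
    (h : ∀ i, f (e i) = g (e i)) : f = g :=
  (bV N).ext h

lemma ptr_sub (Φ Ψ : V N ⊗[F] V N →ₗ[F] V N ⊗[F] V N) : ptr (Φ - Ψ) = ptr Φ - ptr Ψ :=
  ext_e fun i => by simp [ptr_apply, Finset.sum_sub_distrib]

lemma ptr_smul (c : F) (Φ : V N ⊗[F] V N →ₗ[F] V N ⊗[F] V N) : ptr (c • Φ) = c • ptr Φ :=
  ext_e fun i => by simp [ptr_apply, Finset.smul_sum]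

lemma trace_eq_sum_apply (f : V N →ₗ[F] V N) : LinearMap.trace F (V N) f = ∑ j, f (e j) j := by
  simp [LinearMap.trace_eq_matrix_trace F (bV N), Matrix.trace, bV, e]

lemma ptr_map_id (f : V N →ₗ[F] V N) :
    ptr (TensorProduct.map LinearMap.id f) = LinearMap.trace F (V N) f • LinearMap.id :=
  ext_e fun i => by simp [ptr_apply, trace_eq_sum_apply, Finset.sum_smul]

lemma β_comp_β : β N ∘ₗ β N = (q - q⁻¹) • β N + LinearMap.id := by
  refine (bVV N).ext fun ⟨i, j⟩ => ?_
  rw [bVV_apply]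
  rcases lt_trichotomy i j with h | rfl | h
  · simp [β_apply, h, h.ne, h.ne', not_lt_of_gt h, add_comm]
  · simp [β_apply, smul_smul, sub_mul, inv_mul_cancel₀ q_ne_zero, sub_smul]
  · simp [β_apply, h, h.ne, h.ne', not_lt_of_gt h]
    abel

end

def βInv (N : ℕ) : V N ⊗[F] V N →ₗ[F] V N ⊗[F] V N := β N - (q - q⁻¹) • LinearMap.id

lemma β_comp_βInv (N : ℕ) : β N ∘ₗ βInv N = LinearMap.id := by
  rw [βInv, LinearMap.comp_sub, LinearMap.comp_smul, LinearMap.comp_id, β_comp_β]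
  abel

lemma βInv_comp_β (N : ℕ) : βInv N ∘ₗ β N = LinearMap.id := by
  rw [βInv, LinearMap.sub_comp, LinearMap.smul_comp, LinearMap.id_comp, β_comp_β]
  abel

lemma trace_K (N : ℕ) : LinearMap.trace F (V N) (K N) = qint N := by
  have hsum : (q - q⁻¹) * ∑ j : Fin N, q ^ ((N : ℤ) - 1 - 2 * (j : ℕ))
      = q ^ (N : ℤ) - q ^ (-N : ℤ) := by
    rw [Fin.sum_univ_eq_sum_range (fun j => q ^ ((N : ℤ) - 1 - 2 * j)), Finset.mul_sum]
    simp_rw [q_sub_q_inv_mul_zpow_sub_one]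
    rw [Finset.sum_range_sub' (fun j : ℕ => q ^ ((N : ℤ) - 2 * j))]
    simp only [Nat.cast_zero, mul_zero, sub_zero]
    ring_nf
  rw [trace_eq_sum_apply, qint, eq_div_iff q_sub_q_inv_ne_zero, mul_comm, ← hsum]
  simp [K_apply, e_apply]

lemma ptr_map_K_comp_β (N : ℕ) :
    ptr (TensorProduct.map LinearMap.id (K N) ∘ₗ β N) = q ^ (N : ℤ) • LinearMap.id := by
  set a : ℕ → F := fun n => q ^ ((N : ℤ) - 2 * n)
  refine ext_e fun i => ?_
  have hterm : ∀ j : Fin N,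
      TensorProduct.rid F (V N) (TensorProduct.map LinearMap.id (LinearMap.proj j)
        ((TensorProduct.map LinearMap.id (K N) ∘ₗ β N) (e i ⊗ₜ[F] e j)))
      = (if (j : ℕ) < i then a j - a (j + 1) else if (j : ℕ) = i then a i else 0) • e i := by
    intro j
    rcases lt_trichotomy j i with h | rfl | h
    · simp [β_apply, K_apply, e_apply, h, h.ne, h.ne', not_lt_of_gt h, smul_smul,
        q_sub_q_inv_mul_zpow_sub_one, a]
    · simp [β_apply, K_apply, e_apply, smul_smul, a, ← q_mul_zpow_sub_one]
    · simp [β_apply, K_apply, e_apply, h, h.ne, h.ne', not_lt_of_gt h, Fin.val_ne_of_ne h.ne']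
  rw [ptr_apply, Finset.sum_congr rfl fun j _ => hterm j, ← Finset.sum_smul,
    Fin.sum_univ_eq_sum_range
      (fun j => if j < i then a j - a (j + 1) else if j = i then a i else 0),
    Finset.sum_range_truncated_telescope a i.isLt]
  simp [a]

lemma ptr_map_K_comp_βInv (N : ℕ) :
    ptr (TensorProduct.map LinearMap.id (K N) ∘ₗ βInv N) = q ^ (-(N : ℤ)) • LinearMap.id := by
  rw [βInv, LinearMap.comp_sub, LinearMap.comp_smul, LinearMap.comp_id, ptr_sub, ptr_smul,
    ptr_map_K_comp_β, ptr_map_id, trace_K, smul_smul, sub_inv_mul_qint, sub_smul, sub_sub_cancel]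

/-- (a) `trace K_N = [N]_q` (dimension relation at `t = N`);
(b) `ptr₂((id ⊗ K_N) ∘ β_N) = q^N • id` (positive twist relation);
(c) `ptr₂((id ⊗ K_N) ∘ β_N⁻¹) = q^(-N) • id` (negative twist relation). -/
theorem homfly_dimension_and_twist (N : ℕ) :
    LinearMap.trace F (V N) (K N) = qint N ∧
    ptr (TensorProduct.map LinearMap.id (K N) ∘ₗ β N)
      = (q ^ (N : ℤ)) • (LinearMap.id : V N →ₗ[F] V N) ∧
    ∃ βinv : V N ⊗[F] V N →ₗ[F] V N ⊗[F] V N,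
      βinv ∘ₗ β N = LinearMap.id ∧ β N ∘ₗ βinv = LinearMap.id ∧
      ptr (TensorProduct.map LinearMap.id (K N) ∘ₗ βinv)
        = (q ^ (-(N : ℤ))) • (LinearMap.id : V N →ₗ[F] V N) :=
  ⟨trace_K N, ptr_map_K_comp_β N, βInv N, βInv_comp_β N, β_comp_βInv N, ptr_map_K_comp_βInv N⟩

end
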